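/- arXiv:2312.06206 — 4 statements merged into one kernel-verified Lean document; each statement's English description precedes it below -/
import Mathlib

section
/- Let α ∈ (1,2) and define a_i^{(α)} := (1/2π) ∫_{-π}^{π} (4 sin²(η/2))^{α/2} exp(-i·i·η) dη for i ∈ ℤ. Then a_i^{(α)} = (-1)^i Γ(α+1) / (Γ(α/2 - i + 1) Γ(α/2 + i + 1)). -/
/-!
After shifting by a period and substituting `η = 2x + π`, the coefficient becomes
`2^α (-1)^i / π` times `F(i) = ∫_{-π/2}^{π/2} cos^α x · e^{-2iix} dx`. Differentiating
`cos^{α+1} x · e^{-(2ν+1)ix}`, which vanishes at `±π/2`, gives the two-term recurrence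
`(α - 2ν) F(ν) = (α + 2ν + 2) F(ν + 1)`. Written with `1/Γ`, which satisfies
`1/Γ(s) = s/Γ(s+1)` for every `s`, the claimed value obeys the same recurrence. As
`α + 2m + 2 ≠ 0` for `m ≥ 0` and `α - 2m ≠ 0` for `m < 0`, both sides are determined by their
value at `0`, and `F(0) = √π Γ((α+1)/2) / Γ(α/2+1)` is a Beta integral after the substitution
`t = sin x`; Legendre's duplication formula puts it in the stated form.
-/

open Real Complex MeasureTheory intervalIntegral Set

lemma continuous_one_sub_sq_rpow {γ : ℝ} (hγ : 0 ≤ γ) :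
    Continuous fun t : ℝ => (1 - t ^ 2) ^ γ :=
  (continuous_const.sub (continuous_pow 2)).rpow_const fun _ => Or.inr hγ

lemma sq_mul_one_sub_sq_rpow {γ : ℝ} (hγ : γ + 1 ≠ 0) (t : ℝ) :
    t ^ 2 * (1 - t ^ 2) ^ γ = (1 - t ^ 2) ^ γ - (1 - t ^ 2) ^ (γ + 1) := by
  rcases eq_or_ne (1 - t ^ 2) 0 with h | h
  · rw [h, Real.zero_rpow hγ, show t ^ 2 = 1 by linarith]
    ring
  · rw [Real.rpow_add_one h]
    ring

lemma integral_one_sub_sq_rpow_add_one {γ : ℝ} (hγ : 0 ≤ γ) :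
    (2 * γ + 3) * ∫ t in (0 : ℝ)..1, (1 - t ^ 2) ^ (γ + 1) =
      (2 * γ + 2) * ∫ t in (0 : ℝ)..1, (1 - t ^ 2) ^ γ := by
  have hderiv : ∀ t ∈ uIcc (0 : ℝ) 1, HasDerivAt (fun t : ℝ => t * (1 - t ^ 2) ^ (γ + 1))
      ((2 * γ + 3) * (1 - t ^ 2) ^ (γ + 1) - (2 * γ + 2) * (1 - t ^ 2) ^ γ) t := by
    intro t _
    refine ((hasDerivAt_id t).mul (((hasDerivAt_pow 2 t).const_sub 1).rpow_const (p := γ + 1)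
      (Or.inr (by linarith)))).congr_deriv ?_
    rw [add_sub_cancel_right, id]
    push_cast
    linear_combination -(2 * γ + 2) * sq_mul_one_sub_sq_rpow (by linarith) t
  have hJ := ((continuous_one_sub_sq_rpow hγ).intervalIntegrable (μ := volume) 0 1).const_mul
    (2 * γ + 2)
  have hJ₁ := ((continuous_one_sub_sq_rpow (by linarith : 0 ≤ γ + 1)).intervalIntegrable
    (μ := volume) 0 1).const_mul (2 * γ + 3)
  have h := integral_eq_sub_of_hasDerivAt hderiv (hJ₁.sub hJ)
  rw [integral_sub hJ₁ hJ, intervalIntegral.integral_const_mul,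
    intervalIntegral.integral_const_mul] at h
  norm_num [Real.zero_rpow (by linarith : γ + 1 ≠ 0)] at h
  linarith

lemma Complex.betaIntegral_ofReal (u v : ℝ) :
    betaIntegral u v = ↑(∫ x in (0 : ℝ)..1, x ^ (u - 1) * (1 - x) ^ (v - 1)) := by
  rw [betaIntegral, ← integral_ofReal]
  refine integral_congr fun x hx => ?_
  rw [uIcc_of_le zero_le_one] at hx
  rw [ofReal_mul, ofReal_cpow hx.1, ofReal_cpow (sub_nonneg.2 hx.2)]
  push_cast
  rfl

lemma Real.Gamma_mul_Gamma_eq_integral {u v : ℝ} (hu : 0 < u) (hv : 0 < v) :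
    Real.Gamma u * Real.Gamma v =
      Real.Gamma (u + v) * ∫ x in (0 : ℝ)..1, x ^ (u - 1) * (1 - x) ^ (v - 1) := by
  have h := Complex.Gamma_mul_Gamma_eq_betaIntegral (s := u) (t := v) (by simpa) (by simpa)
  rw [Complex.betaIntegral_ofReal, ← ofReal_add, Complex.Gamma_ofReal, Complex.Gamma_ofReal,
    Complex.Gamma_ofReal] at h
  exact_mod_cast h

lemma integral_rpow_one_half_mul_one_sub_rpow {γ : ℝ} (hγ : 0 ≤ γ) :
    ∫ x in (0 : ℝ)..1, x ^ (1 / 2 : ℝ) * (1 - x) ^ γ =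
      2 * ∫ t in (0 : ℝ)..1, t ^ 2 * (1 - t ^ 2) ^ γ := by
  have hg : Continuous fun x : ℝ => x ^ (1 / 2 : ℝ) * (1 - x) ^ γ :=
    (continuous_id.rpow_const fun _ => Or.inr (by norm_num)).mul
      ((continuous_const.sub continuous_id).rpow_const fun _ => Or.inr hγ)
  have h := integral_deriv_smul_comp (a := 0) (b := 1) (f := fun t : ℝ => t ^ 2)
    (f' := fun t : ℝ => 2 * t) (fun t _ => by simpa using hasDerivAt_pow 2 t) (by fun_prop) hg
  rw [one_pow, zero_pow two_ne_zero] at h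
  rw [← h, ← intervalIntegral.integral_const_mul]
  refine integral_congr fun t ht => ?_
  rw [uIcc_of_le zero_le_one] at ht
  simp only [Function.comp, smul_eq_mul, ← Real.sqrt_eq_rpow, Real.sqrt_sq ht.1]
  ring

lemma integral_one_sub_sq_rpow {γ : ℝ} (hγ : 0 ≤ γ) :
    ∫ t in (0 : ℝ)..1, (1 - t ^ 2) ^ γ =
      √π * Real.Gamma (γ + 1) / (2 * Real.Gamma (γ + 3 / 2)) := by
  have hbeta := Real.Gamma_mul_Gamma_eq_integral (u := 3 / 2) (v := γ + 1) (by norm_num)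
    (by linarith)
  have hJ := (continuous_one_sub_sq_rpow hγ).intervalIntegrable (μ := volume) 0 1
  have hJ₁ := (continuous_one_sub_sq_rpow (by linarith : 0 ≤ γ + 1)).intervalIntegrable
    (μ := volume) 0 1
  simp_rw [show (3 / 2 : ℝ) - 1 = 1 / 2 by norm_num, add_sub_cancel_right,
    integral_rpow_one_half_mul_one_sub_rpow hγ, sq_mul_one_sub_sq_rpow (γ := γ) (by linarith),
    integral_sub hJ hJ₁] at hbeta
  have hΓ₃₂ : Real.Gamma (3 / 2) = √π / 2 := by
    rw [show (3 / 2 : ℝ) = 1 / 2 + 1 by norm_num, Real.Gamma_add_one (by norm_num),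
      Real.Gamma_one_half_eq]
    ring
  rw [hΓ₃₂, show 3 / 2 + (γ + 1) = γ + 3 / 2 + 1 by ring,
    Real.Gamma_add_one (s := γ + 3 / 2) (by linarith)] at hbeta
  rw [eq_div_iff (mul_ne_zero two_ne_zero (Real.Gamma_pos_of_pos (by linarith)).ne')]
  linear_combination
    (-2) * hbeta + 2 * Real.Gamma (γ + 3 / 2) * integral_one_sub_sq_rpow_add_one hγ

lemma integral_cos_rpow {α : ℝ} (hα : 1 ≤ α) :
    ∫ x in (-(π / 2))..(π / 2), Real.cos x ^ α =
      √π * Real.Gamma ((α + 1) / 2) / Real.Gamma (α / 2 + 1) := by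
  obtain ⟨γ, hγ, rfl⟩ : ∃ γ, 0 ≤ γ ∧ α = 2 * γ + 1 := ⟨(α - 1) / 2, by linarith, by ring⟩
  have hJ := (continuous_one_sub_sq_rpow hγ).intervalIntegrable (μ := volume)
  have hsubst : ∫ x in (-(π / 2))..(π / 2), Real.cos x ^ (2 * γ + 1) =
      ∫ t in (-1 : ℝ)..1, (1 - t ^ 2) ^ γ := by
    have h := integral_deriv_smul_comp (a := -(π / 2)) (b := π / 2) (f' := Real.cos)
      (fun x _ => Real.hasDerivAt_sin x) Real.continuous_cos.continuousOn
      (continuous_one_sub_sq_rpow hγ)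
    rw [Real.sin_neg, Real.sin_pi_div_two] at h
    rw [← h]
    refine integral_congr fun x hx => ?_
    rw [uIcc_of_le (by linarith [Real.pi_pos])] at hx
    have hc := Real.cos_nonneg_of_mem_Icc hx
    rw [Function.comp_apply, smul_eq_mul, ← Real.cos_sq', ← Real.rpow_natCast_mul hc,
      mul_comm (Real.cos x), ← Real.rpow_add_one' hc (by push_cast; linarith)]
    norm_num
  have heven : ∫ t in (-1 : ℝ)..1, (1 - t ^ 2) ^ γ = 2 * ∫ t in (0 : ℝ)..1, (1 - t ^ 2) ^ γ := by
    have hneg := integral_comp_neg (a := 0) (b := 1) fun t => (1 - t ^ 2) ^ γ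
    simp only [neg_sq, neg_zero] at hneg
    rw [← integral_add_adjacent_intervals (b := 0) (hJ _ _) (hJ _ _), ← hneg]
    ring
  rw [hsubst, heven, integral_one_sub_sq_rpow hγ, show (2 * γ + 1 + 1) / 2 = γ + 1 by ring,
    show (2 * γ + 1) / 2 + 1 = γ + 3 / 2 by ring]
  ring

noncomputable def cosRpowFourier (α : ℝ) (ν : ℂ) : ℂ :=
  ∫ x in (-(π / 2))..(π / 2), (Real.cos x ^ α : ℝ) * cexp (-2 * I * ν * x)

lemma continuous_cos_rpow_mul_cexp {α : ℝ} (hα : 0 ≤ α) (c : ℂ) :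
    Continuous fun x : ℝ => ((Real.cos x ^ α : ℝ) : ℂ) * cexp (c * x) :=
  (continuous_ofReal.comp (Real.continuous_cos.rpow_const fun _ => Or.inr hα)).mul (by fun_prop)

lemma hasDerivAt_cos_rpow_mul_cexp {α : ℝ} (hα : 0 ≤ α) (ν : ℂ) (x : ℝ) :
    HasDerivAt (fun x : ℝ => ((Real.cos x ^ (α + 1) : ℝ) : ℂ) * cexp (-(2 * ν + 1) * I * x))
      (I / 2 * ((α - 2 * ν) * ((Real.cos x ^ α : ℝ) * cexp (-2 * I * ν * x)) -
        (α + 2 * ν + 2) * ((Real.cos x ^ α : ℝ) * cexp (-2 * I * (ν + 1) * x)))) x := by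
  have hpow : Real.cos x ^ (α + 1) = Real.cos x ^ α * Real.cos x := by
    rcases eq_or_ne (Real.cos x) 0 with h | h
    · rw [h, Real.zero_rpow (by linarith), mul_zero]
    · exact Real.rpow_add_one h α
  have hcos :=
    ((Real.hasDerivAt_cos x).rpow_const (p := α + 1) (Or.inr (by linarith))).ofReal_comp
  have hexp := ((hasDerivAt_id x).ofReal_comp.const_mul (-(2 * ν + 1) * I)).cexp
  refine (hcos.mul hexp).congr_deriv ?_
  have hu : cexp (-(x * I)) = Complex.cos x - Complex.sin x * I := by
    rw [← neg_mul, Complex.exp_mul_I, Complex.cos_neg, Complex.sin_neg]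
    ring
  have hE₁ : cexp (-(2 * ν + 1) * I * x) = cexp (-2 * I * ν * x) * cexp (-(x * I)) := by
    rw [← Complex.exp_add]
    ring_nf
  have hE₂ : cexp (-2 * I * (ν + 1) * x) = cexp (-2 * I * ν * x) * cexp (-(x * I)) ^ 2 := by
    rw [sq, ← Complex.exp_add, ← Complex.exp_add]
    ring_nf
  simp only [id, add_sub_cancel_right, hpow, hE₁, hE₂, hu]
  push_cast
  linear_combination ((Real.cos x ^ α : ℝ) : ℂ) * cexp (-2 * I * ν * x) *
    ((-(α + 1) * Complex.cos x * Complex.sin x + (α + 2 * ν + 2) * Complex.sin x ^ 2 * I / 2) *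
      I_sq + I * (α - 2 * ν) / 2 * Complex.sin_sq_add_cos_sq (x : ℂ))

lemma cosRpowFourier_recurrence {α : ℝ} (hα : 0 ≤ α) (ν : ℂ) :
    (α - 2 * ν) * cosRpowFourier α ν = (α + 2 * ν + 2) * cosRpowFourier α (ν + 1) := by
  have hF := ((continuous_cos_rpow_mul_cexp hα (-2 * I * ν)).intervalIntegrable
    (μ := volume) (-(π / 2)) (π / 2)).const_mul (α - 2 * ν)
  have hF₁ := ((continuous_cos_rpow_mul_cexp hα (-2 * I * (ν + 1))).intervalIntegrable
    (μ := volume) (-(π / 2)) (π / 2)).const_mul (α + 2 * ν + 2)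
  have h := integral_eq_sub_of_hasDerivAt (fun x _ => hasDerivAt_cos_rpow_mul_cexp hα ν x)
    ((hF.sub hF₁).const_mul (I / 2))
  rw [intervalIntegral.integral_const_mul, integral_sub hF hF₁,
    intervalIntegral.integral_const_mul, intervalIntegral.integral_const_mul] at h
  simp only [Real.cos_neg, Real.cos_pi_div_two, Real.zero_rpow (by linarith : α + 1 ≠ 0),
    ofReal_zero, zero_mul, sub_zero, mul_eq_zero, div_eq_zero_iff, I_ne_zero, two_ne_zero,
    or_self, false_or, sub_eq_zero] at h
  exact h

lemma eq_of_two_term_recurrence {R : Type*} [CommRing R] [IsDomain R] {p q f g : ℤ → R}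
    (hq : ∀ m, 0 ≤ m → q m ≠ 0) (hp : ∀ m, m < 0 → p m ≠ 0)
    (hf : ∀ m, p m * f m = q m * f (m + 1)) (hg : ∀ m, p m * g m = q m * g (m + 1))
    (h₀ : f 0 = g 0) (n : ℤ) : f n = g n := by
  induction n using Int.induction_on with
  | zero => exact h₀
  | succ k ih => exact mul_left_cancel₀ (hq k (Int.natCast_nonneg k)) (by rw [← hf, ← hg, ih])
  | pred k ih =>
    refine mul_left_cancel₀ (hp (-k - 1) (by omega)) ?_
    rw [hf, hg, sub_add_cancel, ih]

lemma Real.inv_Gamma_eq_self_mul_inv_Gamma_add_one (s : ℝ) :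
    (Real.Gamma s)⁻¹ = s * (Real.Gamma (s + 1))⁻¹ := by
  have h := Complex.one_div_Gamma_eq_self_mul_one_div_Gamma_add_one s
  rw [← ofReal_one, ← ofReal_add, Complex.Gamma_ofReal, Complex.Gamma_ofReal] at h
  exact_mod_cast h

lemma inv_Gamma_mul_Gamma_recurrence (α m : ℝ) :
    (α - 2 * m) * (Real.Gamma (α / 2 - m + 1) * Real.Gamma (α / 2 + m + 1))⁻¹ =
      (α + 2 * m + 2) *
        (Real.Gamma (α / 2 - (m + 1) + 1) * Real.Gamma (α / 2 + (m + 1) + 1))⁻¹ := by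
  rw [show α / 2 - (m + 1) + 1 = α / 2 - m by ring,
    show α / 2 + (m + 1) + 1 = α / 2 + m + 1 + 1 by ring, mul_inv, mul_inv,
    Real.inv_Gamma_eq_self_mul_inv_Gamma_add_one (α / 2 - m),
    Real.inv_Gamma_eq_self_mul_inv_Gamma_add_one (α / 2 + m + 1)]
  ring

lemma cosRpowFourier_intCast {α : ℝ} (hα : 1 ≤ α) (n : ℤ) :
    cosRpowFourier α n = ↑(π * 2 ^ (-α) * Real.Gamma (α + 1) *
      (Real.Gamma (α / 2 - n + 1) * Real.Gamma (α / 2 + n + 1))⁻¹) := by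
  refine eq_of_two_term_recurrence (p := fun m : ℤ => (α - 2 * m : ℂ))
    (q := fun m : ℤ => (α + 2 * m + 2 : ℂ))
    (f := fun m : ℤ => cosRpowFourier α m)
    (g := fun m : ℤ => ↑(π * 2 ^ (-α) * Real.Gamma (α + 1) *
      (Real.Gamma (α / 2 - m + 1) * Real.Gamma (α / 2 + m + 1))⁻¹)) ?_ ?_ ?_ ?_ ?_ n
  · intro m hm
    have : (0 : ℝ) < α + 2 * m + 2 := by
      have : (0 : ℝ) ≤ m := by exact_mod_cast hm
      linarith
    exact_mod_cast this.ne'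
  · intro m hm
    have : (0 : ℝ) < α - 2 * m := by
      have : (m : ℝ) < 0 := by exact_mod_cast hm
      linarith
    exact_mod_cast this.ne'
  · intro m
    simpa using cosRpowFourier_recurrence (by linarith) (m : ℂ)
  · intro m
    have h' := congrArg (fun z : ℝ => ((π * 2 ^ (-α) * Real.Gamma (α + 1) * z : ℝ) : ℂ))
      (inv_Gamma_mul_Gamma_recurrence α m)
    push_cast at h' ⊢
    linear_combination h'
  · have hdup := Real.Gamma_mul_Gamma_add_half ((α + 1) / 2)
    rw [show (α + 1) / 2 + 1 / 2 = α / 2 + 1 by ring, show 2 * ((α + 1) / 2) = α + 1 by ring,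
      show 1 - (α + 1) = -α by ring] at hdup
    have hΓ : Real.Gamma (α / 2 + 1) ≠ 0 := (Real.Gamma_pos_of_pos (by linarith)).ne'
    simp only [cosRpowFourier, Int.cast_zero, mul_zero, zero_mul, Complex.exp_zero, mul_one,
      sub_zero, add_zero, integral_ofReal, integral_cos_rpow hα]
    congr 1
    generalize Real.Gamma (α / 2 + 1) = G at hdup hΓ ⊢
    field_simp
    linear_combination √π * hdup + 2 ^ (-α) * Real.Gamma (α + 1) * Real.sq_sqrt Real.pi_pos.le

lemma integral_sin_half_sq_rpow_mul_cexp (α : ℝ) (n : ℤ) :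
    ∫ η in (-π)..π, (((4 * Real.sin (η / 2) ^ 2) ^ (α / 2) : ℝ) : ℂ) * cexp (-I * n * η) =
      ((2 ^ (α + 1) : ℝ) : ℂ) * (-1) ^ n * cosRpowFourier α n := by
  set g : ℝ → ℂ := fun η => (((4 * Real.sin (η / 2) ^ 2) ^ (α / 2) : ℝ) : ℂ) * cexp (-I * n * η)
  have hper : Function.Periodic g (2 * π) := by
    intro η
    simp only [g]
    rw [show (η + 2 * π) / 2 = η / 2 + π by ring, Real.sin_add_pi, neg_sq,
      show -I * n * ((η + 2 * π : ℝ) : ℂ) = -I * n * η + (-n : ℤ) * (2 * π * I) by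
        push_cast; ring,
      Complex.exp_add, exp_int_mul_two_pi_mul_I, mul_one]
  have hpt : ∀ x ∈ uIcc (-(π / 2)) (π / 2), g (2 * x + π) =
      ((2 ^ α : ℝ) : ℂ) * (-1) ^ n * (((Real.cos x ^ α : ℝ) : ℂ) * cexp (-2 * I * n * x)) := by
    intro x hx
    rw [uIcc_of_le (by linarith [Real.pi_pos])] at hx
    have hc := Real.cos_nonneg_of_mem_Icc hx
    have hbase : (4 * Real.sin ((2 * x + π) / 2) ^ 2) ^ (α / 2) = 2 ^ α * Real.cos x ^ α := by
      rw [show (2 * x + π) / 2 = x + π / 2 by ring, Real.sin_add_pi_div_two,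
        show 4 * Real.cos x ^ 2 = (2 * Real.cos x) ^ 2 by ring,
        ← Real.rpow_natCast_mul (by positivity), ← Real.mul_rpow zero_le_two hc]
      congr 1
      push_cast
      ring
    have hexp : cexp (-I * n * ((2 * x + π : ℝ) : ℂ)) = (-1) ^ n * cexp (-2 * I * n * x) := by
      rw [show -I * n * ((2 * x + π : ℝ) : ℂ) = n * (-(π * I)) + -2 * I * n * x by
          push_cast; ring,
        Complex.exp_add, Complex.exp_int_mul, Complex.exp_neg_pi_mul_I]
    simp only [g, hbase, hexp]
    push_cast
    ring
  calc ∫ η in (-π)..π, g η = ∫ η in (0 : ℝ)..(2 * π), g η := by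
        simpa [show -π + 2 * π = π by ring] using hper.intervalIntegral_add_eq (-π) 0
    _ = 2 * ∫ x in (-(π / 2))..(π / 2), g (2 * x + π) := by
        rw [integral_comp_mul_add (hc := two_ne_zero), show 2 * -(π / 2) + π = 0 by ring,
          show 2 * (π / 2) + π = 2 * π by ring, Complex.real_smul]
        push_cast
        ring
    _ = _ := by
        rw [integral_congr hpt, intervalIntegral.integral_const_mul, cosRpowFourier,
          Real.rpow_add_one two_ne_zero]
        push_cast
        ring

theorem stmt_4_general (α : ℝ) (hα1 : 1 < α) (i : ℤ) :
    (1 / (2 * (π : ℂ))) *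
        ∫ η in (-π)..π,
          (((4 * Real.sin (η / 2) ^ 2) ^ (α / 2) : ℝ) : ℂ) * Complex.exp (-Complex.I * i * η) =
      (((-1 : ℝ) ^ i * Real.Gamma (α + 1) /
        (Real.Gamma (α / 2 - i + 1) * Real.Gamma (α / 2 + i + 1)) : ℝ) : ℂ) := by
  rw [integral_sin_half_sq_rpow_mul_cexp, cosRpowFourier_intCast hα1.le]
  have key : 1 / (2 * π) * (2 ^ (α + 1) * (-1) ^ i * (π * 2 ^ (-α) * Real.Gamma (α + 1) *
      (Real.Gamma (α / 2 - i + 1) * Real.Gamma (α / 2 + i + 1))⁻¹)) =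
      (-1) ^ i * Real.Gamma (α + 1) /
        (Real.Gamma (α / 2 - i + 1) * Real.Gamma (α / 2 + i + 1)) := by
    rw [Real.rpow_add_one two_ne_zero, Real.rpow_neg zero_le_two]
    field_simp
  have := congrArg ((↑) : ℝ → ℂ) key
  push_cast at this ⊢
  exact this

theorem stmt_4 (α : ℝ) (hα1 : 1 < α) (hα2 : α < 2) (i : ℤ) :
    (1 / (2 * (π : ℂ))) *
        ∫ η in (-π)..π,
          (((4 * Real.sin (η / 2) ^ 2) ^ (α / 2) : ℝ) : ℂ) * Complex.exp (-Complex.I * i * η) =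
      (((-1 : ℝ) ^ i * Real.Gamma (α + 1) /
        (Real.Gamma (α / 2 - i + 1) * Real.Gamma (α / 2 + i + 1)) : ℝ) : ℂ) :=
  stmt_4_general α hα1 i
end

section
/- Let H ∈ ℝ^{N×N} be a symmetric positive definite Toeplitz matrix, let c = (p₁,...,p_N)ᵀ = H⁻¹e₁ where e₁ is the first standard basis vector, let J be the anti-identity (flip) matrix, let C be the circulant matrix whose first column is c, and let S be the skew-circulant matrix whose first column is (p₁, -p_N, -p_{N-1}, ..., -p₂)ᵀ. Then for any v ∈ ℝ^N, setting v̂ := (1/(2p₁)) C S (v + i J v), one has H⁻¹v = Re(v̂) + J Im(v̂). -/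
/-!
Let `Z` be the down-shift, `J` the flip, `B = H⁻¹`, `x = B e₀` and `z = Z J x`. For a Toeplitz
matrix `H` the commutator `Z H - H Z` has rank two, and conjugating it by `B` shows that the
displacement `B - Z B Zᵀ` equals `(x xᵀ - z zᵀ) / x₀`. Since `Z` is nilpotent, a matrix is
determined by its displacement, and the lower triangular Toeplitz matrix `L a` with first column
`a` satisfies `L a (L a)ᵀ - Z (L a (L a)ᵀ) Zᵀ = a aᵀ`; this gives the Gohberg–Semencul formula
`x₀ B = L x (L x)ᵀ - L z (L z)ᵀ`, and, as `B` is persymmetric, also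
`x₀ B = (L x)ᵀ L x - (L z)ᵀ L z`. The circulant and skew-circulant matrices of the statement are
`C = L x + (L z)ᵀ` and `S = (L x)ᵀ - L z`; lower triangular Toeplitz matrices commute, so the two
formulas add up to `C S + J C S J = 2 x₀ B`. The real and imaginary parts of `C S (v + i J v)` are
`C S v` and `C S J v`.
-/

open Matrix Complex

lemma Fin.rev_sub_rev {N : ℕ} (i j : Fin N) : i.rev - j.rev = j - i := by
  rw [Fin.ext_iff, Fin.val_sub, Fin.val_sub, Fin.val_rev, Fin.val_rev]
  congr 1
  omega

lemma eq_zero_of_eq_mul_mul_of_isNilpotent {M : Type*} [MonoidWithZero M] {a b d : M}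
    (ha : IsNilpotent a) (h : d = a * d * b) : d = 0 := by
  obtain ⟨k, hk⟩ := ha
  have key : ∀ m : ℕ, a ^ m * d * b ^ m = d := by
    intro m
    induction m with
    | zero => simp
    | succ m ih =>
      calc a ^ (m + 1) * d * b ^ (m + 1) = a ^ m * (a * d * b) * b ^ m := by
            rw [pow_succ, pow_succ']; simp only [mul_assoc]
        _ = d := by rw [← h, ih]
  rw [← key k, hk, zero_mul, zero_mul]

namespace Matrix

variable {R : Type*}

section Semiring

variable [Semiring R] {N n : ℕ} {m : Type*}

variable (R) in
def shiftDown (n : ℕ) : Matrix (Fin (n + 1)) (Fin (n + 1)) R :=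
  of fun i j => if (i : ℕ) = j + 1 then 1 else 0

lemma shiftDown_zero_row : shiftDown R n 0 = 0 := by
  ext j; simp [shiftDown]

lemma shiftDown_succ_row (i : Fin n) : shiftDown R n i.succ = Pi.single i.castSucc 1 := by
  ext j; simp [shiftDown, Pi.single_apply, Fin.ext_iff, eq_comm]

lemma shiftDown_transpose_last_row : (shiftDown R n)ᵀ (Fin.last n) = 0 := by
  ext i; simp [shiftDown]; omega

lemma shiftDown_transpose_castSucc_row (j : Fin n) :
    (shiftDown R n)ᵀ j.castSucc = Pi.single j.succ 1 := by
  ext i; simp [shiftDown, Pi.single_apply, Fin.ext_iff]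

@[simp] lemma shiftDown_mul_apply_zero (M : Matrix (Fin (n + 1)) m R) (j : m) :
    (shiftDown R n * M) 0 j = 0 := by
  rw [mul_apply', shiftDown_zero_row, zero_dotProduct]

@[simp] lemma shiftDown_mul_apply_succ (M : Matrix (Fin (n + 1)) m R) (i : Fin n) (j : m) :
    (shiftDown R n * M) i.succ j = M i.castSucc j := by
  rw [mul_apply', shiftDown_succ_row, single_dotProduct, one_mul]

@[simp] lemma mul_shiftDown_apply_last (M : Matrix m (Fin (n + 1)) R) (i : m) :
    (M * shiftDown R n) i (Fin.last n) = 0 := by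
  change M i ⬝ᵥ (shiftDown R n)ᵀ (Fin.last n) = 0
  rw [shiftDown_transpose_last_row, dotProduct_zero]

@[simp] lemma mul_shiftDown_apply_castSucc (M : Matrix m (Fin (n + 1)) R) (i : m) (j : Fin n) :
    (M * shiftDown R n) i j.castSucc = M i j.succ := by
  change M i ⬝ᵥ (shiftDown R n)ᵀ j.castSucc = _
  rw [shiftDown_transpose_castSucc_row, dotProduct_single, mul_one]

@[simp] lemma shiftDown_mulVec_zero (x : Fin (n + 1) → R) : (shiftDown R n *ᵥ x) 0 = 0 := by
  change shiftDown R n 0 ⬝ᵥ x = 0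
  rw [shiftDown_zero_row, zero_dotProduct]

@[simp] lemma shiftDown_mulVec_succ (x : Fin (n + 1) → R) (i : Fin n) :
    (shiftDown R n *ᵥ x) i.succ = x i.castSucc := by
  change shiftDown R n i.succ ⬝ᵥ x = _
  rw [shiftDown_succ_row, single_dotProduct, one_mul]

@[simp] lemma shiftDown_transpose_mulVec_last (x : Fin (n + 1) → R) :
    ((shiftDown R n)ᵀ *ᵥ x) (Fin.last n) = 0 := by
  change (shiftDown R n)ᵀ (Fin.last n) ⬝ᵥ x = 0
  rw [shiftDown_transpose_last_row, zero_dotProduct]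

@[simp] lemma shiftDown_transpose_mulVec_castSucc (x : Fin (n + 1) → R) (j : Fin n) :
    ((shiftDown R n)ᵀ *ᵥ x) j.castSucc = x j.succ := by
  change (shiftDown R n)ᵀ j.castSucc ⬝ᵥ x = _
  rw [shiftDown_transpose_castSucc_row, single_dotProduct, one_mul]

lemma shiftDown_pow_apply (k : ℕ) (i j : Fin (n + 1)) :
    (shiftDown R n ^ k) i j = if (i : ℕ) = j + k then 1 else 0 := by
  induction k generalizing j with
  | zero => simp [one_apply, Fin.ext_iff]
  | succ k ih =>
    rw [pow_succ]
    induction j using Fin.lastCases with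
    | last => simp; omega
    | cast j => simp [ih, add_assoc, add_comm 1 k]

lemma shiftDown_pow_succ_self : shiftDown R n ^ (n + 1) = 0 := by
  ext i j
  rw [shiftDown_pow_apply, if_neg (by omega), zero_apply]

variable (R) in
def exchange (N : ℕ) : Matrix (Fin N) (Fin N) R :=
  of fun i j => if j = i.rev then 1 else 0

lemma exchange_apply (i j : Fin N) : exchange R N i j = if j = i.rev then 1 else 0 := rfl

lemma exchange_row (i : Fin N) : exchange R N i = Pi.single i.rev 1 := by
  ext j; simp [exchange, Pi.single_apply]

lemma exchange_transpose : (exchange R N)ᵀ = exchange R N := by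
  ext i j
  simp only [exchange, transpose_apply, of_apply]
  exact if_congr (by rw [← Fin.rev_eq_iff, eq_comm]) rfl rfl

lemma exchange_mulVec (x : Fin N → R) : exchange R N *ᵥ x = fun i => x i.rev := by
  ext i
  change exchange R N i ⬝ᵥ x = _
  rw [exchange_row, single_dotProduct, one_mul]

lemma exchange_mul_apply (M : Matrix (Fin N) m R) (i : Fin N) (j : m) :
    (exchange R N * M) i j = M i.rev j := by
  rw [mul_apply', exchange_row, single_dotProduct, one_mul]

lemma mul_exchange_apply (M : Matrix m (Fin N) R) (i : m) (j : Fin N) :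
    (M * exchange R N) i j = M i j.rev := by
  change M i ⬝ᵥ (exchange R N)ᵀ j = _
  rw [exchange_transpose, exchange_row, dotProduct_single, mul_one]

lemma exchange_mul_mul_exchange (M : Matrix (Fin N) (Fin N) R) :
    exchange R N * M * exchange R N = M.submatrix Fin.rev Fin.rev := by
  ext i j
  rw [mul_exchange_apply, exchange_mul_apply, submatrix_apply]

lemma exchange_mul_exchange : exchange R N * exchange R N = 1 := by
  have := submatrix_one (α := R) _ (Fin.rev_injective (n := N))
  rwa [← exchange_mul_mul_exchange, Matrix.mul_one] at this

lemma commute_exchange_of_submatrix_rev {A : Matrix (Fin N) (Fin N) R}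
    (hA : A.submatrix Fin.rev Fin.rev = A) : Commute (exchange R N) A :=
  calc exchange R N * A = exchange R N * A * (exchange R N * exchange R N) := by
        rw [exchange_mul_exchange, Matrix.mul_one]
    _ = A * exchange R N := by rw [← Matrix.mul_assoc, exchange_mul_mul_exchange, hA]

lemma submatrix_rev_mul (A B : Matrix (Fin N) (Fin N) R) :
    (A * B).submatrix Fin.rev Fin.rev = A.submatrix Fin.rev Fin.rev * B.submatrix Fin.rev Fin.rev :=
  submatrix_mul _ _ _ _ _ Fin.rev_bijective

lemma exchange_mul_shiftDown_mul_exchange :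
    exchange R (n + 1) * shiftDown R n * exchange R (n + 1) = (shiftDown R n)ᵀ := by
  ext i j
  simp only [exchange_mul_mul_exchange, submatrix_apply, transpose_apply, shiftDown, of_apply,
    Fin.val_rev]
  exact if_congr (by omega) rfl rfl

lemma shiftDown_mulVec_exchange_mulVec (x : Fin (n + 1) → R) :
    shiftDown R n *ᵥ exchange R (n + 1) *ᵥ x = fun k => if k = 0 then 0 else x (-k) := by
  ext k
  induction k using Fin.cases with
  | zero => simp
  | succ k =>
    rw [shiftDown_mulVec_succ, exchange_mulVec, if_neg (Fin.succ_ne_zero k)]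
    refine congrArg x ?_
    rw [Fin.ext_iff, Fin.val_rev, Fin.val_neg, if_neg (Fin.succ_ne_zero k)]
    simp

def lowerToeplitz (a : Fin N → R) : Matrix (Fin N) (Fin N) R :=
  of fun i j => if j ≤ i then a (i - j) else 0

lemma lowerToeplitz_submatrix_rev (a : Fin N → R) :
    (lowerToeplitz a).submatrix Fin.rev Fin.rev = (lowerToeplitz a)ᵀ := by
  ext i j
  simp [lowerToeplitz, Fin.rev_sub_rev]

lemma lowerToeplitz_transpose_submatrix_rev (a : Fin N → R) :
    (lowerToeplitz a)ᵀ.submatrix Fin.rev Fin.rev = lowerToeplitz a := by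
  rw [← transpose_submatrix, lowerToeplitz_submatrix_rev, transpose_transpose]

lemma lowerToeplitz_eq_sum_pow_shiftDown (a : Fin (n + 1) → R) :
    lowerToeplitz a = ∑ k, a k • shiftDown R n ^ (k : ℕ) := by
  ext i j
  simp only [lowerToeplitz, of_apply, sum_apply, smul_apply, shiftDown_pow_apply, smul_eq_mul,
    mul_ite, mul_one, mul_zero]
  split_ifs with hji
  · have hval := Fin.coe_sub_iff_le.mpr hji
    rw [Finset.sum_eq_single (i - j), if_pos (by omega)]
    · intro k _ hk
      exact if_neg fun h => hk (Fin.ext (by omega))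
    · simp
  · rw [Fin.le_iff_val_le_val] at hji
    exact (Finset.sum_eq_zero fun k _ => if_neg (by omega)).symm

lemma lowerToeplitz_mulVec_single_zero (a : Fin (n + 1) → R) :
    lowerToeplitz a *ᵥ Pi.single 0 1 = a := by
  ext i
  simp [mulVec_single, lowerToeplitz]

end Semiring

section CommSemiring

variable [CommSemiring R] {n : ℕ}

lemma commute_shiftDown_lowerToeplitz (a : Fin (n + 1) → R) :
    Commute (shiftDown R n) (lowerToeplitz a) := by
  rw [lowerToeplitz_eq_sum_pow_shiftDown]
  exact Commute.sum_right _ _ _ fun k _ => (Commute.self_pow _ _).smul_right _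

lemma lowerToeplitz_commute (a b : Fin (n + 1) → R) :
    Commute (lowerToeplitz a) (lowerToeplitz b) := by
  rw [lowerToeplitz_eq_sum_pow_shiftDown, lowerToeplitz_eq_sum_pow_shiftDown]
  exact Commute.sum_left _ _ _ fun k _ => Commute.sum_right _ _ _ fun l _ =>
    ((Commute.pow_pow_self _ _ _).smul_left _).smul_right _

end CommSemiring

def IsToeplitz {α : Type*} {N : ℕ} (H : Matrix (Fin N) (Fin N) α) : Prop :=
  ∃ t : ℤ → α, ∀ i j, H i j = t (i - j)

lemma IsToeplitz.apply_eq {α : Type*} {N : ℕ} {H : Matrix (Fin N) (Fin N) α} (hH : H.IsToeplitz)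
    {i j k l : Fin N} (h : (i : ℤ) - j = k - l) : H i j = H k l := by
  obtain ⟨t, ht⟩ := hH
  rw [ht, ht, h]

lemma IsToeplitz.submatrix_rev {α : Type*} {N : ℕ} {H : Matrix (Fin N) (Fin N) α}
    (hT : H.IsToeplitz) (hS : H.IsSymm) : H.submatrix Fin.rev Fin.rev = H := by
  ext i j
  rw [submatrix_apply, hT.apply_eq (k := j) (l := i) (by simp only [Fin.val_rev]; omega), hS.apply]

section Ring

variable [Ring R] {n : ℕ}

def skewCirculant {N : ℕ} (s : Fin N → R) : Matrix (Fin N) (Fin N) R :=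
  of fun j k => if k ≤ j then s (j - k) else -s (j - k)

lemma circulant_eq_lowerToeplitz_add_transpose (c : Fin (n + 1) → R) :
    circulant c =
      lowerToeplitz c + (lowerToeplitz (shiftDown R n *ᵥ exchange R (n + 1) *ᵥ c))ᵀ := by
  ext i j
  rw [circulant_apply, add_apply, transpose_apply, shiftDown_mulVec_exchange_mulVec]
  simp only [lowerToeplitz, of_apply]
  rcases le_or_gt j i with hji | hij
  · rw [if_pos hji]
    split_ifs with hij hji0
    · rw [add_zero]
    · exact absurd (sub_eq_zero.mpr (le_antisymm hji hij)) hji0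
    · rw [add_zero]
  · rw [if_neg (not_le.mpr hij), if_pos hij.le, if_neg (sub_ne_zero.mpr hij.ne'), neg_sub,
      zero_add]

lemma skewCirculant_eq_transpose_sub_lowerToeplitz (c : Fin (n + 1) → R) :
    skewCirculant (fun k => if k = 0 then c 0 else -c (-k)) =
      (lowerToeplitz c)ᵀ - lowerToeplitz (shiftDown R n *ᵥ exchange R (n + 1) *ᵥ c) := by
  ext j k
  rw [sub_apply, transpose_apply, shiftDown_mulVec_exchange_mulVec]
  simp only [skewCirculant, lowerToeplitz, of_apply]
  rcases lt_trichotomy j k with hjk | rfl | hkj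
  · simp [not_le.mpr hjk, hjk.le, sub_ne_zero.mpr hjk.ne]
  · simp
  · simp [not_le.mpr hkj, hkj.le, sub_ne_zero.mpr hkj.ne']

lemma shiftDown_mul_transpose :
    shiftDown R n * (shiftDown R n)ᵀ = 1 - vecMulVec (Pi.single 0 1) (Pi.single 0 1) := by
  ext i j
  induction i using Fin.cases with
  | zero => simp [one_apply, vecMulVec_apply, Pi.single_apply, eq_comm]
  | succ i =>
    rw [shiftDown_mul_apply_succ, transpose_apply, sub_apply, vecMulVec_apply,
      Pi.single_eq_of_ne (Fin.succ_ne_zero i), zero_mul, sub_zero, one_apply]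
    simp only [shiftDown, of_apply, Fin.ext_iff, Fin.val_succ, Fin.val_castSucc, eq_comm]

lemma shiftDown_mulVec_transpose_mulVec (x : Fin (n + 1) → R) :
    shiftDown R n *ᵥ (shiftDown R n)ᵀ *ᵥ x = x - x 0 • Pi.single 0 1 := by
  ext i
  induction i using Fin.cases <;> simp

/-- The last entry of `w` is left free: it cancels in the `(0, last)` entry of the right side. -/
lemma IsToeplitz.smul_commutator_shiftDown {H : Matrix (Fin (n + 1)) (Fin (n + 1)) R}
    (hH : H.IsToeplitz) (α : R) (w : Fin (n + 1) → R)
    (hw : ∀ j : Fin n, w j.castSucc = α * H 0 j.succ) :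
    α • (shiftDown R n * H - H * shiftDown R n) =
      vecMulVec (exchange R (n + 1) *ᵥ w) (exchange R (n + 1) *ᵥ Pi.single 0 1) -
        vecMulVec (Pi.single 0 1) w := by
  ext i j
  rw [exchange_mulVec, exchange_mulVec]
  induction i using Fin.cases <;> induction j using Fin.lastCases <;>
    simp [vecMulVec_apply, Pi.single_apply, Fin.rev_succ, Fin.rev_castSucc, hw]
  case succ.last i =>
    rw [hH.apply_eq (k := 0) (l := i.rev.succ) (by simp; omega)]
  case succ.cast i j =>
    rw [hH.apply_eq (k := i.succ) (l := j.succ) (by simp), sub_self, mul_zero]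

lemma IsToeplitz.mulVec_shiftDown_transpose_mulVec {H : Matrix (Fin (n + 1)) (Fin (n + 1)) R}
    (hH : H.IsToeplitz) (x : Fin (n + 1) → R) (j : Fin n) :
    (H *ᵥ (shiftDown R n)ᵀ *ᵥ x) j.castSucc = (H *ᵥ x) j.succ - H j.succ 0 * x 0 := by
  change (fun k => H j.castSucc k) ⬝ᵥ ((shiftDown R n)ᵀ *ᵥ x) = (fun k => H j.succ k) ⬝ᵥ x - _
  simp only [dotProduct]
  rw [Fin.sum_univ_castSucc, Fin.sum_univ_succ]
  simp only [shiftDown_transpose_mulVec_castSucc, shiftDown_transpose_mulVec_last, mul_zero,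
    add_zero, add_sub_cancel_left]
  exact Finset.sum_congr rfl fun k _ => by rw [hH.apply_eq (k := j.succ) (l := k.succ) (by simp)]

end Ring

section CommRing

variable [CommRing R] {N n : ℕ}

lemma inv_submatrix_rev (A : Matrix (Fin N) (Fin N) R) :
    A⁻¹.submatrix Fin.rev Fin.rev = (A.submatrix Fin.rev Fin.rev)⁻¹ :=
  (inv_submatrix_equiv A Fin.revPerm Fin.revPerm).symm

variable (R n) in
def displacement : Matrix (Fin (n + 1)) (Fin (n + 1)) R →ₗ[R] Matrix (Fin (n + 1)) (Fin (n + 1)) R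
    where
  toFun A := A - shiftDown R n * A * (shiftDown R n)ᵀ
  map_add' A B := by simp only [Matrix.mul_add, Matrix.add_mul]; abel
  map_smul' r A := by simp only [Matrix.mul_smul, Matrix.smul_mul, smul_sub, RingHom.id_apply]

lemma displacement_apply (A : Matrix (Fin (n + 1)) (Fin (n + 1)) R) :
    displacement R n A = A - shiftDown R n * A * (shiftDown R n)ᵀ := rfl

lemma displacement_injective : Function.Injective (displacement R n) := by
  refine (injective_iff_map_eq_zero _).mpr fun D hD => ?_
  exact eq_zero_of_eq_mul_mul_of_isNilpotent ⟨n + 1, shiftDown_pow_succ_self⟩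
    (sub_eq_zero.mp hD)

lemma displacement_lowerToeplitz_mul_transpose (a : Fin (n + 1) → R) :
    displacement R n (lowerToeplitz a * (lowerToeplitz a)ᵀ) = vecMulVec a a := by
  have hZL := (commute_shiftDown_lowerToeplitz (R := R) a).eq
  have hconj : shiftDown R n * (lowerToeplitz a * (lowerToeplitz a)ᵀ) * (shiftDown R n)ᵀ =
      lowerToeplitz a * (shiftDown R n * (shiftDown R n)ᵀ) * (lowerToeplitz a)ᵀ :=
    calc _ = shiftDown R n * lowerToeplitz a * (shiftDown R n * lowerToeplitz a)ᵀ := by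
          rw [transpose_mul]; simp only [Matrix.mul_assoc]
      _ = _ := by rw [hZL, transpose_mul]; simp only [Matrix.mul_assoc]
  rw [displacement_apply, hconj, shiftDown_mul_transpose, Matrix.mul_sub, Matrix.sub_mul,
    Matrix.mul_one, mul_vecMulVec, vecMulVec_mul, vecMul_transpose,
    lowerToeplitz_mulVec_single_zero, sub_sub_cancel]

variable {H : Matrix (Fin (n + 1)) (Fin (n + 1)) R} {x : Fin (n + 1) → R}

theorem IsToeplitz.smul_inv_commutator_shiftDown (hT : H.IsToeplitz) (hS : H.IsSymm)
    (hdet : IsUnit H.det) (hx : x = H⁻¹ *ᵥ Pi.single 0 1) :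
    x 0 • (H⁻¹ * shiftDown R n - shiftDown R n * H⁻¹) =
      vecMulVec x ((shiftDown R n)ᵀ *ᵥ x) -
        vecMulVec (shiftDown R n *ᵥ exchange R (n + 1) *ᵥ x) (exchange R (n + 1) *ᵥ x) := by
  have hHB : H * H⁻¹ = 1 := mul_nonsing_inv H hdet
  have hBH : H⁻¹ * H = 1 := nonsing_inv_mul H hdet
  have hHx : H *ᵥ x = Pi.single 0 1 := by rw [hx, mulVec_mulVec, hHB, one_mulVec]
  have hinv_mulVec : ∀ y, H⁻¹ *ᵥ H *ᵥ y = y := fun y => by rw [mulVec_mulVec, hBH, one_mulVec]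
  have hu : ∀ j : Fin n, (H *ᵥ (shiftDown R n)ᵀ *ᵥ x) j.castSucc = -x 0 * H 0 j.succ := by
    intro j
    rw [hT.mulVec_shiftDown_transpose_mulVec, hHx, Pi.single_eq_of_ne (Fin.succ_ne_zero j),
      hS.apply, zero_sub, neg_mul, mul_comm]
  have hvecMul : ∀ y, y ᵥ* H⁻¹ = H⁻¹ *ᵥ y := fun y => by
    rw [← vecMul_transpose, hS.inv.eq]
  have hBJ : ∀ y, H⁻¹ *ᵥ exchange R (n + 1) *ᵥ y = exchange R (n + 1) *ᵥ H⁻¹ *ᵥ y := fun y => by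
    rw [mulVec_mulVec, mulVec_mulVec,
      (commute_exchange_of_submatrix_rev (by rw [inv_submatrix_rev, hT.submatrix_rev hS])).eq]
  have hJZ : ∀ y, exchange R (n + 1) *ᵥ (shiftDown R n)ᵀ *ᵥ y =
      shiftDown R n *ᵥ exchange R (n + 1) *ᵥ y := fun y => by
    rw [mulVec_mulVec, mulVec_mulVec, ← exchange_mul_shiftDown_mul_exchange, ← Matrix.mul_assoc,
      ← Matrix.mul_assoc, exchange_mul_exchange, Matrix.one_mul]
  have hconj : H⁻¹ * (shiftDown R n * H - H * shiftDown R n) * H⁻¹ =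
      H⁻¹ * shiftDown R n - shiftDown R n * H⁻¹ := by
    simp only [Matrix.mul_sub, Matrix.sub_mul, Matrix.mul_assoc, hHB, Matrix.mul_one]
    rw [← Matrix.mul_assoc H⁻¹ H, hBH, Matrix.one_mul]
  rw [← hconj, ← neg_neg (x 0), neg_smul, ← Matrix.smul_mul, ← Matrix.mul_smul,
    hT.smul_commutator_shiftDown _ _ hu, Matrix.mul_sub, Matrix.sub_mul, mul_vecMulVec,
    mul_vecMulVec, vecMulVec_mul, vecMulVec_mul, hvecMul, hvecMul, hBJ, hBJ, hinv_mulVec, ← hx,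
    hJZ, neg_sub]

theorem IsToeplitz.smul_displacement_inv (hT : H.IsToeplitz) (hS : H.IsSymm)
    (hdet : IsUnit H.det) (hx : x = H⁻¹ *ᵥ Pi.single 0 1) :
    x 0 • displacement R n H⁻¹ =
      vecMulVec x x - vecMulVec (shiftDown R n *ᵥ exchange R (n + 1) *ᵥ x)
        (shiftDown R n *ᵥ exchange R (n + 1) *ᵥ x) := by
  have hsplit : displacement R n H⁻¹ =
      H⁻¹ * (1 - shiftDown R n * (shiftDown R n)ᵀ) +
        (H⁻¹ * shiftDown R n - shiftDown R n * H⁻¹) * (shiftDown R n)ᵀ := by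
    simp only [displacement_apply, Matrix.mul_sub, Matrix.sub_mul, Matrix.mul_one,
      Matrix.mul_assoc]
    abel
  rw [hsplit, smul_add, ← Matrix.smul_mul (x 0) (H⁻¹ * _ - _),
    hT.smul_inv_commutator_shiftDown hS hdet hx, shiftDown_mul_transpose, sub_sub_cancel,
    mul_vecMulVec, ← hx, Matrix.sub_mul, vecMulVec_mul, vecMulVec_mul, vecMul_transpose,
    vecMul_transpose, shiftDown_mulVec_transpose_mulVec, vecMulVec_sub, vecMulVec_smul]
  abel

theorem IsToeplitz.smul_inv_eq_lowerToeplitz (hT : H.IsToeplitz) (hS : H.IsSymm)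
    (hdet : IsUnit H.det) (hx : x = H⁻¹ *ᵥ Pi.single 0 1) :
    x 0 • H⁻¹ = lowerToeplitz x * (lowerToeplitz x)ᵀ -
      lowerToeplitz (shiftDown R n *ᵥ exchange R (n + 1) *ᵥ x) *
        (lowerToeplitz (shiftDown R n *ᵥ exchange R (n + 1) *ᵥ x))ᵀ :=
  displacement_injective <| by
    rw [map_smul, hT.smul_displacement_inv hS hdet hx, map_sub,
      displacement_lowerToeplitz_mul_transpose, displacement_lowerToeplitz_mul_transpose]

theorem IsToeplitz.circulant_mul_skewCirculant_add_exchange_conj (hT : H.IsToeplitz)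
    (hS : H.IsSymm) (hdet : IsUnit H.det) (hx : x = H⁻¹ *ᵥ Pi.single 0 1) :
    circulant x * skewCirculant (fun k => if k = 0 then x 0 else -x (-k)) +
      exchange R (n + 1) * (circulant x * skewCirculant (fun k => if k = 0 then x 0 else -x (-k))) *
        exchange R (n + 1) = (2 * x 0) • H⁻¹ := by
  have hGS := hT.smul_inv_eq_lowerToeplitz hS hdet hx
  have hGS_rev := congrArg (·.submatrix Fin.rev Fin.rev) hGS
  simp only [submatrix_smul, submatrix_sub, Pi.smul_apply, Pi.sub_apply, submatrix_rev_mul,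
    inv_submatrix_rev, hT.submatrix_rev hS, lowerToeplitz_submatrix_rev,
    lowerToeplitz_transpose_submatrix_rev] at hGS_rev
  have hcomm := (lowerToeplitz_commute x (shiftDown R n *ᵥ exchange R (n + 1) *ᵥ x)).eq
  have hcomm_t := congrArg transpose hcomm
  rw [transpose_mul, transpose_mul] at hcomm_t
  rw [circulant_eq_lowerToeplitz_add_transpose, skewCirculant_eq_transpose_sub_lowerToeplitz,
    exchange_mul_mul_exchange, submatrix_rev_mul, submatrix_add, submatrix_sub, Pi.add_apply,
    Pi.add_apply, Pi.sub_apply, Pi.sub_apply, lowerToeplitz_submatrix_rev,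
    lowerToeplitz_submatrix_rev, lowerToeplitz_transpose_submatrix_rev,
    lowerToeplitz_transpose_submatrix_rev, two_mul, add_smul]
  nth_rewrite 1 [hGS]
  rw [hGS_rev]
  simp only [Matrix.add_mul, Matrix.mul_sub, hcomm, hcomm_t]
  abel

end CommRing

lemma map_ofReal_mulVec_add_I_mul {m l : Type*} [Fintype l] (M : Matrix m l ℝ) (a b : l → ℝ) :
    M.map ofReal *ᵥ (fun j => (a j : ℂ) + I * b j) =
      fun i => ((M *ᵥ a) i : ℂ) + I * (M *ᵥ b) i := by
  ext i
  simp only [mulVec, dotProduct, map_apply, mul_add, Finset.sum_add_distrib, ofReal_sum,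
    ofReal_mul, Finset.mul_sum]
  congr 1
  exact Finset.sum_congr rfl fun j _ => by ring

theorem mulVec_eq_re_add_mulVec_im_of_add_conj_eq_smul {ι : Type*} [Fintype ι]
    {A M J : Matrix ι ι ℝ} {r : ℝ} (hr : r ≠ 0) (h : M + J * M * J = r • A) (v : ι → ℝ)
    (w : ι → ℂ) (hw : w = fun k =>
      1 / (r : ℂ) * (M.map ofReal *ᵥ fun l => (v l : ℂ) + I * (J *ᵥ v) l) k) :
    A *ᵥ v = fun k => (w k).re + (J *ᵥ fun l => (w l).im) k := by
  have hw' : w = fun k => ((r⁻¹ * (M *ᵥ v) k : ℝ) : ℂ) + I * (r⁻¹ * (M *ᵥ J *ᵥ v) k : ℝ) := by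
    rw [hw, map_ofReal_mulVec_add_I_mul]
    ext k
    push_cast
    ring
  have hA : A = r⁻¹ • (M + J * M * J) := by rw [h, smul_smul, inv_mul_cancel₀ hr, one_smul]
  subst hw'
  simp only [add_re, ofReal_re, I_re, zero_mul, ofReal_im, mul_zero, sub_zero, add_im, I_im,
    one_mul, add_zero, zero_add, mul_im, mul_re]
  change A *ᵥ v = r⁻¹ • (M *ᵥ v) + J *ᵥ (r⁻¹ • (M *ᵥ J *ᵥ v))
  rw [hA, smul_mulVec, add_mulVec, mulVec_smul, mulVec_mulVec, mulVec_mulVec, Matrix.mul_assoc,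
    smul_add]

end Matrix

theorem stmt_9 (N : ℕ) (hN : 0 < N)
    (H : Matrix (Fin N) (Fin N) ℝ)
    (hToep : ∃ t : ℤ → ℝ, ∀ i j : Fin N, H i j = t ((i : ℤ) - (j : ℤ)))
    (hSymm : H.IsSymm) (hPD : H.PosDef)
    (c : Fin N → ℝ) (hc : c = H⁻¹ *ᵥ Pi.single ⟨0, hN⟩ 1)
    (J : Matrix (Fin N) (Fin N) ℝ)
    (hJ : ∀ i j : Fin N, J i j = if (i : ℕ) + (j : ℕ) = N - 1 then 1 else 0)
    (C : Matrix (Fin N) (Fin N) ℝ) (hC : C = Matrix.circulant c)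
    (s : Fin N → ℝ) (hs : ∀ k : Fin N, s k = if k = ⟨0, hN⟩ then c ⟨0, hN⟩ else -c (-k))
    (S : Matrix (Fin N) (Fin N) ℝ)
    (hS : ∀ j k : Fin N, S j k = if (k : ℕ) ≤ (j : ℕ) then s (j - k) else -s (j - k))
    (v : Fin N → ℝ)
    (vhat : Fin N → ℂ)
    (hvhat : vhat = fun k =>
      (1 / (2 * (c ⟨0, hN⟩ : ℂ))) *
        (((C.map Complex.ofReal * S.map Complex.ofReal) *ᵥ
          fun l => (v l : ℂ) + Complex.I * ((J *ᵥ v) l : ℂ)) k)) :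
    H⁻¹ *ᵥ v = fun k => (vhat k).re + (J *ᵥ fun l => (vhat l).im) k := by
  obtain ⟨n, rfl⟩ := Nat.exists_eq_add_one_of_ne_zero hN.ne'
  simp only [Fin.zero_eta] at hc hs hvhat
  have hJ' : J = exchange ℝ (n + 1) := by
    ext i j
    rw [hJ, exchange_apply]
    exact if_congr (by rw [Fin.ext_iff, Fin.val_rev]; omega) rfl rfl
  have hS' : S = skewCirculant s := by
    ext j k
    rw [hS]
    rfl
  obtain rfl : s = fun k => if k = 0 then c 0 else -c (-k) := funext hs
  subst hJ' hC hS'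
  have hp : 0 < c 0 := by simpa [hc, mulVec_single] using hPD.inv.diag_pos (i := 0)
  have hGS := IsToeplitz.circulant_mul_skewCirculant_add_exchange_conj (H := H) hToep hSymm
    hPD.det_pos.ne'.isUnit hc
  have hmap : ∀ A B : Matrix (Fin (n + 1)) (Fin (n + 1)) ℝ,
      A.map ofReal * B.map ofReal = (A * B).map ofReal :=
    fun A B => (Matrix.map_mul (f := ofRealHom)).symm
  rw [hmap] at hvhat
  exact mulVec_eq_re_add_mulVec_im_of_add_conj_eq_smul (by positivity) hGS v vhat
    (by simp only [hvhat, ofReal_mul, ofReal_ofNat])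
end

section
/- Let W_h be the space of grid functions w = {w_{ij}}, vanishing outside the index set {1,...,N}², with inner product ⟨w₁,w₂⟩ = h² Σ_{i,j=1}^N (w₁)_{ij}(w₂)_{ij}. Let A denote the matrix of the discrete fractional Laplacian L_h^α with symbol (4sin²η/2 + 4sin²ξ/2)^{α/2}, and à the matrix of δ_x^α + δ_y^α with symbol (4sin²η/2)^{α/2} + (4sin²ξ/2)^{α/2}. Then for every w ∈ W_h and α ∈ (1,2), ⟨Aw, w⟩ ≤ ⟨Ãw, w⟩, i.e. ‖w‖_A² ≤ ‖w‖_Ã². -/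
open Real Complex MeasureTheory intervalIntegral
open scoped ComplexConjugate

/-!
Both quadratic forms are finite sections of Fourier multipliers on `ℤ²`: for a symbol `g` with
Fourier coefficients `a`, Parseval gives `∑ p, (∑ q, a (p - q) w q) w p = (2π)⁻² ∫∫ g |ŵ|²`,
where `ŵ` is the trigonometric polynomial with coefficients `w`. The claim therefore follows
from the pointwise symbol inequality `(a + b) ^ (α / 2) ≤ a ^ (α / 2) + b ^ (α / 2)`, valid
since `α / 2 ≤ 1`.
-/

section IteratedIntervalIntegral

variable {E : Type*} [NormedAddCommGroup E] [NormedSpace ℝ E]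

lemma intervalIntegral_intervalIntegral_finsetSum {ι : Type*} (s : Finset ι)
    {f : ι → ℝ → ℝ → E} (hf : ∀ i ∈ s, Continuous (Function.uncurry (f i)))
    (a b c d : ℝ) :
    ∫ x in a..b, ∫ y in c..d, ∑ i ∈ s, f i x y =
      ∑ i ∈ s, ∫ x in a..b, ∫ y in c..d, f i x y := by
  have inner (x : ℝ) :
      ∫ y in c..d, ∑ i ∈ s, f i x y = ∑ i ∈ s, ∫ y in c..d, f i x y :=
    integral_finsetSum fun i hi =>
      ((hf i hi).comp (Continuous.prodMk_right x)).intervalIntegrable _ _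
  simp_rw [inner]
  exact integral_finsetSum fun i hi =>
    (continuous_parametric_intervalIntegral_of_continuous' (hf i hi) c d).intervalIntegrable _ _

lemma intervalIntegral_intervalIntegral_ofReal (f : ℝ → ℝ → ℝ) (a b c d : ℝ) :
    ∫ x in a..b, ∫ y in c..d, (f x y : ℂ) =
      ((∫ x in a..b, ∫ y in c..d, f x y : ℝ) : ℂ) := by
  simp_rw [integral_ofReal]

lemma intervalIntegral_intervalIntegral_mono {f g : ℝ → ℝ → ℝ}
    (hf : Continuous (Function.uncurry f)) (hg : Continuous (Function.uncurry g))
    {a b c d : ℝ} (hab : a ≤ b) (hcd : c ≤ d) (hfg : ∀ x y, f x y ≤ g x y) :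
    ∫ x in a..b, ∫ y in c..d, f x y ≤ ∫ x in a..b, ∫ y in c..d, g x y := by
  refine integral_mono hab
    ((continuous_parametric_intervalIntegral_of_continuous' hf c d).intervalIntegrable _ _)
    ((continuous_parametric_intervalIntegral_of_continuous' hg c d).intervalIntegrable _ _)
    fun x => integral_mono hcd ?_ ?_ (hfg x)
  · exact (hf.comp (Continuous.prodMk_right x)).intervalIntegrable _ _
  · exact (hg.comp (Continuous.prodMk_right x)).intervalIntegrable _ _

end IteratedIntervalIntegral

noncomputable def planeWave (p : ℤ × ℤ) (η ξ : ℝ) : ℂ :=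
  exp (-I * (p.1 * η + p.2 * ξ))

lemma continuous_planeWave (p : ℤ × ℤ) : Continuous (Function.uncurry (planeWave p)) := by
  unfold planeWave Function.uncurry
  fun_prop

lemma planeWave_sub (p q : ℤ × ℤ) (η ξ : ℝ) :
    planeWave (p - q) η ξ = planeWave p η ξ * conj (planeWave q η ξ) := by
  rw [planeWave, planeWave, planeWave, ← exp_conj, ← Complex.exp_add]
  congr 1
  simp only [map_mul, map_add, map_neg, conj_I, conj_ofReal, map_intCast, Prod.fst_sub,
    Prod.snd_sub, Int.cast_sub]
  ring

noncomputable def fourierCoeff₂ (g : ℝ → ℝ → ℝ) (p : ℤ × ℤ) : ℂ :=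
  1 / (4 * (π : ℂ) ^ 2) *
    ∫ η in (-π)..π, ∫ ξ in (-π)..π, (g η ξ : ℂ) * planeWave p η ξ

noncomputable def trigPoly (F : Finset (ℤ × ℤ)) (w : ℤ × ℤ → ℝ) (η ξ : ℝ) : ℂ :=
  ∑ p ∈ F, (w p : ℂ) * planeWave p η ξ

lemma continuous_trigPoly (F : Finset (ℤ × ℤ)) (w : ℤ × ℤ → ℝ) :
    Continuous (Function.uncurry (trigPoly F w)) :=
  continuous_finsetSum _ fun p _ => continuous_const.mul (continuous_planeWave p)

lemma sum_sum_mul_planeWave_sub (F : Finset (ℤ × ℤ)) (w : ℤ × ℤ → ℝ) (η ξ : ℝ) :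
    ∑ p ∈ F, ∑ q ∈ F, (w p * w q : ℂ) * planeWave (p - q) η ξ =
      (‖trigPoly F w η ξ‖ ^ 2 : ℝ) := by
  rw [ofReal_pow, ← mul_conj', trigPoly, map_sum, Finset.sum_mul_sum]
  refine Finset.sum_congr rfl fun p _ => Finset.sum_congr rfl fun q _ => ?_
  rw [planeWave_sub, map_mul, conj_ofReal]
  ring

theorem sum_sum_fourierCoeff₂_re_mul_eq_integral {g : ℝ → ℝ → ℝ}
    (hg : Continuous (Function.uncurry g)) (F : Finset (ℤ × ℤ)) (w : ℤ × ℤ → ℝ) :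
    ∑ p ∈ F, (∑ q ∈ F, (fourierCoeff₂ g (p - q)).re * w q) * w p =
      1 / (4 * π ^ 2) *
        ∫ η in (-π)..π, ∫ ξ in (-π)..π, g η ξ * ‖trigPoly F w η ξ‖ ^ 2 := by
  have hterm (p q : ℤ × ℤ) : Continuous (Function.uncurry fun η ξ =>
      (w p * w q : ℂ) * ((g η ξ : ℂ) * planeWave (p - q) η ξ)) :=
    continuous_const.mul ((continuous_ofReal.comp hg).mul (continuous_planeWave _))
  have hcomplex : ∑ p ∈ F, ∑ q ∈ F, (w p * w q : ℂ) * fourierCoeff₂ g (p - q) =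
      ((1 / (4 * π ^ 2) *
        ∫ η in (-π)..π, ∫ ξ in (-π)..π, g η ξ * ‖trigPoly F w η ξ‖ ^ 2 : ℝ) : ℂ) :=
    calc ∑ p ∈ F, ∑ q ∈ F, (w p * w q : ℂ) * fourierCoeff₂ g (p - q)
        = 1 / (4 * (π : ℂ) ^ 2) * ∑ z ∈ F ×ˢ F, ∫ η in (-π)..π, ∫ ξ in (-π)..π,
            (w z.1 * w z.2 : ℂ) * ((g η ξ : ℂ) * planeWave (z.1 - z.2) η ξ) := by
          rw [Finset.sum_product, Finset.mul_sum]
          refine Finset.sum_congr rfl fun p _ => ?_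
          rw [Finset.mul_sum]
          refine Finset.sum_congr rfl fun q _ => ?_
          simp only [fourierCoeff₂, intervalIntegral.integral_const_mul]
          ring
      _ = 1 / (4 * (π : ℂ) ^ 2) * ∫ η in (-π)..π, ∫ ξ in (-π)..π,
            ((g η ξ * ‖trigPoly F w η ξ‖ ^ 2 : ℝ) : ℂ) := by
          rw [← intervalIntegral_intervalIntegral_finsetSum _ fun z _ => hterm z.1 z.2]
          simp only [Finset.sum_product, ofReal_mul, ← sum_sum_mul_planeWave_sub F w,
            Finset.mul_sum, mul_left_comm]
      _ = _ := by
          rw [intervalIntegral_intervalIntegral_ofReal]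
          norm_cast
  calc ∑ p ∈ F, (∑ q ∈ F, (fourierCoeff₂ g (p - q)).re * w q) * w p
      = (∑ p ∈ F, ∑ q ∈ F, (w p * w q : ℂ) * fourierCoeff₂ g (p - q)).re := by
        simp only [re_sum, Finset.sum_mul, ← ofReal_mul, re_ofReal_mul]
        exact Finset.sum_congr rfl fun p _ => Finset.sum_congr rfl fun q _ => by ring
    _ = _ := by rw [hcomplex, ofReal_re]

lemma tsum_tsum_mul_eq_sum_sum {α : Type*} (K : α → α → ℝ) {w : α → ℝ} {F : Finset α}
    (hw : ∀ p ∉ F, w p = 0) :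
    ∑' p, (∑' q, K p q * w q) * w p = ∑ p ∈ F, (∑ q ∈ F, K p q * w q) * w p := by
  rw [tsum_eq_sum fun p hp => by rw [hw p hp, mul_zero]]
  exact Finset.sum_congr rfl fun p _ => by
    rw [tsum_eq_sum fun q hq => by rw [hw q hq, mul_zero]]

theorem stmt_11_general (α h : ℝ) (hα1 : 1 < α) (hα2 : α < 2) (N : ℕ)
    (w : ℤ × ℤ → ℝ)
    (hw : ∀ p : ℤ × ℤ, (p.1 < 1 ∨ (N : ℤ) < p.1 ∨ p.2 < 1 ∨ (N : ℤ) < p.2) → w p = 0)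
    (aA : ℤ → ℤ → ℝ)
    (haA : ∀ i j : ℤ, aA i j = ((1 / (4 * (π : ℂ) ^ 2)) *
      ∫ η in (-π)..π, ∫ ξ in (-π)..π,
        (((4 * Real.sin (η / 2) ^ 2 + 4 * Real.sin (ξ / 2) ^ 2) ^ (α / 2) : ℝ) : ℂ)
          * Complex.exp (-Complex.I * (i * η + j * ξ))).re)
    (aT : ℤ → ℤ → ℝ)
    (haT : ∀ i j : ℤ, aT i j = ((1 / (4 * (π : ℂ) ^ 2)) *
      ∫ η in (-π)..π, ∫ ξ in (-π)..π,
        ((((4 * Real.sin (η / 2) ^ 2) ^ (α / 2) + (4 * Real.sin (ξ / 2) ^ 2) ^ (α / 2) : ℝ)) : ℂ)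
          * Complex.exp (-Complex.I * (i * η + j * ξ))).re) :
    h ^ 2 * ∑' p : ℤ × ℤ, (∑' q : ℤ × ℤ, aA (p.1 - q.1) (p.2 - q.2) * w q) * w p ≤
      h ^ 2 * ∑' p : ℤ × ℤ, (∑' q : ℤ × ℤ, aT (p.1 - q.1) (p.2 - q.2) * w q) * w p := by
  set gA : ℝ → ℝ → ℝ := fun η ξ =>
    (4 * Real.sin (η / 2) ^ 2 + 4 * Real.sin (ξ / 2) ^ 2) ^ (α / 2)
  set gT : ℝ → ℝ → ℝ := fun η ξ =>
    (4 * Real.sin (η / 2) ^ 2) ^ (α / 2) + (4 * Real.sin (ξ / 2) ^ 2) ^ (α / 2)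
  have hexp : 0 ≤ α / 2 := by linarith
  have hgA : Continuous (Function.uncurry gA) :=
    (continuous_rpow_const hexp).comp (by fun_prop)
  have hgT : Continuous (Function.uncurry gT) :=
    ((continuous_rpow_const hexp).comp (by fun_prop)).add
      ((continuous_rpow_const hexp).comp (by fun_prop))
  have hsymbol (η ξ : ℝ) : gA η ξ ≤ gT η ξ :=
    rpow_add_le_add_rpow (by positivity) (by positivity) hexp (by linarith)
  set F := Finset.Icc (1 : ℤ) N ×ˢ Finset.Icc (1 : ℤ) N
  have hsupp : ∀ p ∉ F, w p = 0 := fun p hp => hw p <| by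
    simp only [F, Finset.mem_product, Finset.mem_Icc] at hp
    omega
  have hA (p q : ℤ × ℤ) : aA (p.1 - q.1) (p.2 - q.2) = (fourierCoeff₂ gA (p - q)).re := haA _ _
  have hT (p q : ℤ × ℤ) : aT (p.1 - q.1) (p.2 - q.2) = (fourierCoeff₂ gT (p - q)).re := haT _ _
  simp only [hA, hT, tsum_tsum_mul_eq_sum_sum _ hsupp,
    sum_sum_fourierCoeff₂_re_mul_eq_integral hgA, sum_sum_fourierCoeff₂_re_mul_eq_integral hgT]
  have hweight := (continuous_trigPoly F w).norm.pow 2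
  gcongr
  exact intervalIntegral_intervalIntegral_mono (f := fun η ξ => gA η ξ * ‖trigPoly F w η ξ‖ ^ 2)
    (g := fun η ξ => gT η ξ * ‖trigPoly F w η ξ‖ ^ 2)
    (by exact hgA.mul hweight) (by exact hgT.mul hweight)
    (by linarith [pi_pos]) (by linarith [pi_pos])
    fun η ξ => mul_le_mul_of_nonneg_right (hsymbol η ξ) (sq_nonneg _)

theorem stmt_11 (α h : ℝ) (hα1 : 1 < α) (hα2 : α < 2) (hh : 0 < h) (N : ℕ)
    (w : ℤ × ℤ → ℝ)
    (hw : ∀ p : ℤ × ℤ, (p.1 < 1 ∨ (N : ℤ) < p.1 ∨ p.2 < 1 ∨ (N : ℤ) < p.2) → w p = 0)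
    (aA : ℤ → ℤ → ℝ)
    (haA : ∀ i j : ℤ, aA i j = ((1 / (4 * (π : ℂ) ^ 2)) *
      ∫ η in (-π)..π, ∫ ξ in (-π)..π,
        (((4 * Real.sin (η / 2) ^ 2 + 4 * Real.sin (ξ / 2) ^ 2) ^ (α / 2) : ℝ) : ℂ)
          * Complex.exp (-Complex.I * (i * η + j * ξ))).re)
    (aT : ℤ → ℤ → ℝ)
    (haT : ∀ i j : ℤ, aT i j = ((1 / (4 * (π : ℂ) ^ 2)) *
      ∫ η in (-π)..π, ∫ ξ in (-π)..π,
        ((((4 * Real.sin (η / 2) ^ 2) ^ (α / 2) + (4 * Real.sin (ξ / 2) ^ 2) ^ (α / 2) : ℝ)) : ℂ)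
          * Complex.exp (-Complex.I * (i * η + j * ξ))).re) :
    h ^ 2 * ∑' p : ℤ × ℤ, (∑' q : ℤ × ℤ, aA (p.1 - q.1) (p.2 - q.2) * w q) * w p ≤
      h ^ 2 * ∑' p : ℤ × ℤ, (∑' q : ℤ × ℤ, aT (p.1 - q.1) (p.2 - q.2) * w q) * w p :=
  stmt_11_general α h hα1 hα2 N w hw aA haA aT haT
end

section
/- Let α ∈ (1,2) and a_i^{(α)} = (-1)^i Γ(α+1)/(Γ(α/2-i+1)Γ(α/2+i+1)) for i ∈ ℤ. Then a_0^{(α)} > 0, a_i^{(α)} = a_{-i}^{(α)} for all i, a_i^{(α)} ≤ 0 for all i ≠ 0, and Σ_{i∈ℤ} a_i^{(α)} = 0. -/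
open Real Filter Topology

/-!
With `s = α / 2`, the coefficients telescope: `α a_i = Γ(α + 1) (g i - g (i + 1))` where
`g k = (-1)^k / (Γ(s + 1 - k) Γ(s + k))`, and `(k + s) g (k + 1) = (k - s) g k`. For `k ≥ 1` and
`0 < s ≤ 1` this recurrence makes `g k` negative and increasing, so `a_i ≤ 0` for `i ≥ 1`; for
`s ≥ 1/2` it also gives `|g k| ≤ |g 1| / k`, so `g k → 0`. Hence `∑_{i ≥ 1} a_i = Γ(α + 1) g 1 / α`,
the same holds for `i ≤ -1` by symmetry, and `a_0 = -2 Γ(α + 1) g 1 / α` because `g 0 = -g 1`.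
-/

theorem hasSum_telescoping_of_nonneg {f F : ℕ → ℝ} {L : ℝ} (hf : ∀ n, 0 ≤ f n)
    (hfF : ∀ n, f n = F (n + 1) - F n) (hF : Tendsto F atTop (𝓝 L)) :
    HasSum f (L - F 0) := by
  rw [hasSum_iff_tendsto_nat_of_nonneg hf]
  simp_rw [hfF, Finset.sum_range_sub]
  exact hF.sub_const _

/-- Unlike `Real.Gamma_add_one`, this needs no `x ≠ 0`: Mathlib's `Gamma` vanishes at the poles, so
`(Gamma x)⁻¹` is the entire function `1 / Γ`. This keeps the identities below hypothesis-free. -/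
theorem Real.inv_Gamma_eq_mul_inv_Gamma_add_one (x : ℝ) :
    (Gamma x)⁻¹ = x * (Gamma (x + 1))⁻¹ := by
  rcases ne_or_eq x 0 with h | rfl
  · rw [Gamma_add_one h, mul_inv, mul_inv_cancel_left₀ h]
  · rw [zero_add, Gamma_zero, inv_zero, zero_mul]

noncomputable def fracCoeff (α : ℝ) (i : ℤ) : ℝ :=
  (-1 : ℝ) ^ i * Gamma (α + 1) / (Gamma (α / 2 - i + 1) * Gamma (α / 2 + i + 1))

noncomputable def fracCoeffAntidiff (s : ℝ) (k : ℤ) : ℝ :=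
  (-1 : ℝ) ^ k * ((Gamma (s + 1 - k))⁻¹ * (Gamma (s + k))⁻¹)

theorem fracCoeffAntidiff_succ (s : ℝ) (k : ℤ) :
    (k + s) * fracCoeffAntidiff s (k + 1) = (k - s) * fracCoeffAntidiff s k := by
  simp only [fracCoeffAntidiff, zpow_add_one₀ (by norm_num : (-1 : ℝ) ≠ 0), Int.cast_add,
    Int.cast_one, show s + 1 - (k + 1) = s - k by ring, show s + (k + 1) = s + k + 1 by ring,
    inv_Gamma_eq_mul_inv_Gamma_add_one (s - k), inv_Gamma_eq_mul_inv_Gamma_add_one (s + k),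
    show s - k + 1 = s + 1 - k by ring]
  ring

theorem fracCoeffAntidiff_zero (s : ℝ) : fracCoeffAntidiff s 0 = -fracCoeffAntidiff s 1 := by
  simp [fracCoeffAntidiff, mul_comm]

theorem mul_fracCoeff_eq_sub (α : ℝ) (i : ℤ) :
    α * fracCoeff α i =
      Gamma (α + 1) * (fracCoeffAntidiff (α / 2) i - fracCoeffAntidiff (α / 2) (i + 1)) := by
  have h₁ := inv_Gamma_eq_mul_inv_Gamma_add_one (α / 2 - i)
  have h₂ := inv_Gamma_eq_mul_inv_Gamma_add_one (α / 2 + i)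
  simp only [fracCoeff, fracCoeffAntidiff, Int.cast_add, Int.cast_one]
  rw [show α / 2 + 1 - (i + 1) = α / 2 - i by ring, show α / 2 + (i + 1) = α / 2 + i + 1 by ring,
    show α / 2 + 1 - i = α / 2 - i + 1 by ring, h₁, h₂, zpow_add_one₀ (by norm_num),
    div_eq_mul_inv, mul_inv]
  ring

theorem fracCoeff_neg (α : ℝ) (i : ℤ) : fracCoeff α (-i) = fracCoeff α i := by
  simp only [fracCoeff, zpow_neg, ← inv_zpow, inv_neg_one, Int.cast_neg, sub_neg_eq_add]
  rw [← sub_eq_add_neg, mul_comm (Gamma _)]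

section Antidiff

variable {s : ℝ}

theorem fracCoeffAntidiff_nonpos (h0 : 0 < s) (h1 : s ≤ 1) {n : ℕ} (hn : 1 ≤ n) :
    fracCoeffAntidiff s n ≤ 0 := by
  induction n, hn using Nat.le_induction with
  | base =>
    have hΓ := Gamma_pos_of_pos h0
    have hΓ' := Gamma_pos_of_pos (by linarith : 0 < s + 1)
    have : 0 < (Gamma s)⁻¹ * (Gamma (s + 1))⁻¹ := by positivity
    simp only [fracCoeffAntidiff, Nat.cast_one, zpow_one, Int.cast_one, add_sub_cancel_right]
    linarith
  | succ n hn ih =>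
    have hrec := fracCoeffAntidiff_succ s n
    have hn' : (1 : ℝ) ≤ n := by exact_mod_cast hn
    push_cast at hrec ⊢
    nlinarith

theorem fracCoeffAntidiff_le_succ (h0 : 0 < s) (h1 : s ≤ 1) {n : ℕ} (hn : 1 ≤ n) :
    fracCoeffAntidiff s n ≤ fracCoeffAntidiff s (n + 1) := by
  have hrec := fracCoeffAntidiff_succ s n
  have hneg := fracCoeffAntidiff_nonpos h0 h1 hn
  have key : (n + s) * (fracCoeffAntidiff s (n + 1) - fracCoeffAntidiff s n) =
      2 * s * -fracCoeffAntidiff s n := by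
    push_cast at hrec
    linear_combination hrec
  have : 0 ≤ (n + s) * (fracCoeffAntidiff s (n + 1) - fracCoeffAntidiff s n) := by
    rw [key]; nlinarith
  exact sub_nonneg.mp (nonneg_of_mul_nonneg_right this (by positivity))

theorem fracCoeffAntidiff_one_le_mul (h0 : 1 / 2 ≤ s) (h1 : s ≤ 1) {n : ℕ} (hn : 1 ≤ n) :
    fracCoeffAntidiff s 1 ≤ n * fracCoeffAntidiff s n := by
  induction n, hn using Nat.le_induction with
  | base => simp
  | succ n hn ih =>
    have hrec := fracCoeffAntidiff_succ s n
    have hneg := fracCoeffAntidiff_nonpos (by linarith) h1 hn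
    have hn' : (1 : ℝ) ≤ n := by exact_mod_cast hn
    have key : (n + s) * ((n + 1) * fracCoeffAntidiff s (n + 1) - n * fracCoeffAntidiff s n) =
        (s + 2 * s * n - n) * -fracCoeffAntidiff s n := by
      push_cast at hrec
      linear_combination (n + 1 : ℝ) * hrec
    have : 0 ≤ (n + s) * ((n + 1) * fracCoeffAntidiff s (n + 1) - n * fracCoeffAntidiff s n) := by
      rw [key]; exact mul_nonneg (by nlinarith) (by linarith)
    have := sub_nonneg.mp (nonneg_of_mul_nonneg_right this (by positivity))
    push_cast
    linarith

theorem tendsto_fracCoeffAntidiff (h0 : 1 / 2 ≤ s) (h1 : s ≤ 1) :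
    Tendsto (fun n : ℕ ↦ fracCoeffAntidiff s n) atTop (𝓝 0) := by
  refine tendsto_of_tendsto_of_tendsto_of_le_of_le'
    (tendsto_const_div_atTop_nhds_zero_nat (fracCoeffAntidiff s 1)) tendsto_const_nhds ?_ ?_
  all_goals filter_upwards [eventually_ge_atTop 1] with n hn
  · rw [div_le_iff₀' (by positivity)]
    exact fracCoeffAntidiff_one_le_mul h0 h1 hn
  · exact fracCoeffAntidiff_nonpos (by linarith) h1 hn

end Antidiff

section Coeff

variable {α : ℝ}

theorem fracCoeff_zero_pos (hα : -1 < α) : 0 < fracCoeff α 0 := by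
  have := Gamma_pos_of_pos (by linarith : 0 < α + 1)
  have := Gamma_pos_of_pos (by linarith : 0 < α / 2 + 1)
  simp only [fracCoeff, zpow_zero, Int.cast_zero, sub_zero, add_zero, one_mul]
  positivity

theorem fracCoeff_natCast_add_one_nonpos (h0 : 0 < α) (h2 : α ≤ 2) (n : ℕ) :
    fracCoeff α (n + 1) ≤ 0 := by
  have hmono := fracCoeffAntidiff_le_succ (s := α / 2) (by linarith) (by linarith)
    (Nat.le_add_left 1 n)
  have h := mul_fracCoeff_eq_sub α (n + 1)
  have := Gamma_pos_of_pos (by linarith : 0 < α + 1)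
  push_cast at hmono h
  nlinarith

theorem fracCoeff_nonpos (h0 : 0 < α) (h2 : α ≤ 2) {i : ℤ} (hi : i ≠ 0) : fracCoeff α i ≤ 0 := by
  obtain ⟨n, rfl | rfl⟩ : ∃ n : ℕ, i = n + 1 ∨ i = -(n + 1) := ⟨i.natAbs - 1, by omega⟩
  · exact fracCoeff_natCast_add_one_nonpos h0 h2 n
  · rw [fracCoeff_neg]
    exact fracCoeff_natCast_add_one_nonpos h0 h2 n

theorem hasSum_fracCoeff_natCast_add_one (h1 : 1 ≤ α) (h2 : α ≤ 2) :
    HasSum (fun n : ℕ ↦ fracCoeff α (n + 1)) (Gamma (α + 1) / α * fracCoeffAntidiff (α / 2) 1) := by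
  set κ := Gamma (α + 1) / α with hκ
  have htel : ∀ n : ℕ, -fracCoeff α (n + 1) =
      κ * fracCoeffAntidiff (α / 2) (n + 1 + 1 : ℕ) - κ * fracCoeffAntidiff (α / 2) (n + 1 : ℕ) := by
    intro n
    have h := mul_fracCoeff_eq_sub α (n + 1)
    push_cast
    rw [← mul_sub, hκ, div_mul_eq_mul_div, eq_div_iff (by linarith)]
    linarith
  have hlim : Tendsto (fun n : ℕ ↦ κ * fracCoeffAntidiff (α / 2) (n + 1 : ℕ)) atTop (𝓝 0) := by
    simpa using ((tendsto_fracCoeffAntidiff (by linarith) (by linarith)).comp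
      (tendsto_add_atTop_nat 1)).const_mul κ
  have := hasSum_telescoping_of_nonneg
    (fun n ↦ neg_nonneg.mpr (fracCoeff_natCast_add_one_nonpos (by linarith) h2 n)) htel hlim
  simpa using this.neg

theorem hasSum_fracCoeff (h1 : 1 ≤ α) (h2 : α ≤ 2) : HasSum (fracCoeff α) 0 := by
  have hpos := hasSum_fracCoeff_natCast_add_one h1 h2
  have hneg : HasSum (fun n : ℕ ↦ fracCoeff α (-(n + 1)))
      (Gamma (α + 1) / α * fracCoeffAntidiff (α / 2) 1) := by
    simpa only [fracCoeff_neg] using hpos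
  convert hpos.of_add_one_of_neg_add_one hneg using 1
  have h := mul_fracCoeff_eq_sub α 0
  rw [fracCoeffAntidiff_zero, zero_add] at h
  field_simp
  linarith

end Coeff

theorem stmt_17 (α : ℝ) (hα1 : 1 < α) (hα2 : α < 2)
    (a : ℤ → ℝ)
    (ha : ∀ i : ℤ, a i = (-1 : ℝ) ^ i * Real.Gamma (α + 1) /
      (Real.Gamma (α / 2 - i + 1) * Real.Gamma (α / 2 + i + 1))) :
    0 < a 0 ∧ (∀ i : ℤ, a i = a (-i)) ∧ (∀ i : ℤ, i ≠ 0 → a i ≤ 0) ∧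
      ∑' i : ℤ, a i = 0 := by
  obtain rfl : a = fracCoeff α := funext ha
  exact ⟨fracCoeff_zero_pos (by linarith), fun i ↦ (fracCoeff_neg α i).symm,
    fun i hi ↦ fracCoeff_nonpos (by linarith) hα2.le hi, (hasSum_fracCoeff hα1.le hα2.le).tsum_eq⟩
end
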